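/- arXiv:1807.03199 — 7 statements merged into one kernel-verified Lean document; each statement's English description precedes it below -/
import Mathlib

section
/- Let A and E be m×n complex matrices with m ≥ n, rank(A) = n, and Δ = ‖E‖·‖A⁺‖ < 1 (so that A+E also has rank n). Then the matrix H = (A+E)⁺ − A⁺ satisfies ‖H‖ ≤ √2 · (Δ/(1 − Δ)) · ‖A⁺‖. -/
open scoped Matrix Matrix.Norms.L2Operator

/-- Moore–Penrose inverse of a full-column-rank matrix: `K⁺ = (KᴴK)⁻¹Kᴴ`. -/
noncomputable def pinv {m n : ℕ} (A : Matrix (Fin m) (Fin n) ℂ) : Matrix (Fin n) (Fin m) ℂ :=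
  (Aᴴ * A)⁻¹ * Aᴴ

/-!
Write `B = A + E`, `α = ‖A⁺‖`, `β = ‖B⁺‖` and `P = 1 - BB⁺`, the orthogonal projection onto
`(range B)ᗮ`. Since `A⁺A = 1` and `BᴴP = 0`,
`A⁺ - B⁺ = A⁺(B - A)B⁺ + A⁺A⁺ᴴ(A - B)ᴴP`,
and the two terms `S`, `T` satisfy `STᴴ = 0` because `B⁺P = 0`. Hence
`‖A⁺ - B⁺‖² ≤ ‖SSᴴ + TTᴴ‖ ≤ (‖E‖αβ)² + (‖E‖α²)²`.
Finally `A⁺B = 1 + A⁺E` is invertible (so `B` has full column rank) and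
`B⁺ = A⁺(BB⁺) - A⁺EB⁺` gives `β ≤ α / (1 - ‖E‖α)`.
-/

namespace Matrix

section Rank

variable {m n K : Type*} [Fintype m] [Fintype n] [Field K]

theorem isUnit_of_rank_eq_card [DecidableEq n] {A : Matrix n n K}
    (h : A.rank = Fintype.card n) : IsUnit A := by
  rw [← mulVec_surjective_iff_isUnit, ← coe_mulVecLin, ← LinearMap.range_eq_top]
  apply Submodule.eq_top_of_finrank_eq
  rw [Module.finrank_fintype_fun_eq_card]
  exact h

theorem rank_eq_card_of_isUnit_mul [DecidableEq n] {L : Matrix n m K} {B : Matrix m n K}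
    (h : IsUnit (L * B)) : B.rank = Fintype.card n :=
  le_antisymm (rank_le_card_width B) ((rank_of_isUnit _ h).symm.le.trans (rank_mul_le_right L B))

theorem isUnit_conjTranspose_mul_self_of_rank_eq_card [DecidableEq n] [PartialOrder K]
    [StarRing K] [StarOrderedRing K] {A : Matrix m n K} (h : A.rank = Fintype.card n) :
    IsUnit (Aᴴ * A) :=
  isUnit_of_rank_eq_card (by rw [rank_conjTranspose_mul_self, h])

end Rank

variable {m n 𝕜 : Type*} [Fintype m] [Fintype n] [DecidableEq n] [RCLike 𝕜]

theorem l2_opNorm_self_mul_conjTranspose [DecidableEq m] (A : Matrix m n 𝕜) :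
    ‖A * Aᴴ‖ = ‖A‖ * ‖A‖ := by
  simpa [l2_opNorm_conjTranspose] using l2_opNorm_conjTranspose_mul_self Aᴴ

theorem l2_opNorm_add_sq_le_of_mul_conjTranspose_eq_zero [DecidableEq m] {S T : Matrix m n 𝕜}
    (h : S * Tᴴ = 0) : ‖S + T‖ ^ 2 ≤ ‖S‖ ^ 2 + ‖T‖ ^ 2 := by
  have h' : T * Sᴴ = 0 := by simpa using congrArg conjTranspose h
  have hexp : (S + T) * (S + T)ᴴ = S * Sᴴ + T * Tᴴ := by
    rw [conjTranspose_add, Matrix.add_mul, Matrix.mul_add, Matrix.mul_add, h, h']; abel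
  calc ‖S + T‖ ^ 2 = ‖S * Sᴴ + T * Tᴴ‖ := by rw [← hexp, l2_opNorm_self_mul_conjTranspose, sq]
    _ ≤ ‖S * Sᴴ‖ + ‖T * Tᴴ‖ := norm_add_le _ _
    _ = ‖S‖ ^ 2 + ‖T‖ ^ 2 := by simp only [l2_opNorm_self_mul_conjTranspose, sq]

end Matrix

open Matrix

section Pinv

variable {m n : ℕ} {A B E : Matrix (Fin m) (Fin n) ℂ}

theorem pinv_mul_self (hA : IsUnit (Aᴴ * A)) : pinv A * A = 1 := by
  rw [pinv, Matrix.mul_assoc, nonsing_inv_mul _ ((isUnit_iff_isUnit_det _).1 hA)]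

theorem conjTranspose_mul_pinv (A : Matrix (Fin m) (Fin n) ℂ) : (A * pinv A)ᴴ = A * pinv A := by
  simp [pinv, conjTranspose_mul, conjTranspose_nonsing_inv, Matrix.mul_assoc]

theorem isStarProjection_mul_pinv (hA : IsUnit (Aᴴ * A)) : IsStarProjection (A * pinv A) where
  isIdempotentElem := by
    rw [IsIdempotentElem, Matrix.mul_assoc, ← Matrix.mul_assoc (pinv A), pinv_mul_self hA,
      Matrix.one_mul]
  isSelfAdjoint := conjTranspose_mul_pinv A

theorem conjTranspose_mul_one_sub_mul_pinv (hA : IsUnit (Aᴴ * A)) :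
    Aᴴ * (1 - A * pinv A) = 0 := by
  rw [pinv, Matrix.mul_sub, Matrix.mul_one, ← Matrix.mul_assoc, ← Matrix.mul_assoc,
    mul_nonsing_inv _ ((isUnit_iff_isUnit_det _).1 hA), Matrix.one_mul, sub_self]

theorem pinv_mul_one_sub_mul_pinv (hA : IsUnit (Aᴴ * A)) : pinv A * (1 - A * pinv A) = 0 := by
  rw [Matrix.mul_sub, Matrix.mul_one, ← Matrix.mul_assoc, pinv_mul_self hA, Matrix.one_mul,
    sub_self]

theorem pinv_mul_conjTranspose_pinv_mul_conjTranspose (hA : IsUnit (Aᴴ * A)) :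
    pinv A * (pinv A)ᴴ * Aᴴ = pinv A := by
  rw [Matrix.mul_assoc, ← conjTranspose_mul, conjTranspose_mul_pinv, ← Matrix.mul_assoc,
    pinv_mul_self hA, Matrix.one_mul]

theorem pinv_sub_pinv (hA : IsUnit (Aᴴ * A)) (hB : IsUnit (Bᴴ * B)) :
    pinv A - pinv B =
      pinv A * (B - A) * pinv B + pinv A * (pinv A)ᴴ * (A - B)ᴴ * (1 - B * pinv B) := by
  have h₁ : pinv A * (B - A) * pinv B = pinv A * (B * pinv B) - pinv B := by
    rw [Matrix.mul_sub, Matrix.sub_mul, pinv_mul_self hA, Matrix.one_mul, Matrix.mul_assoc]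
  have h₂ : pinv A * (pinv A)ᴴ * (A - B)ᴴ * (1 - B * pinv B) =
      pinv A - pinv A * (B * pinv B) := by
    rw [conjTranspose_sub, Matrix.mul_sub (pinv A * (pinv A)ᴴ), Matrix.sub_mul,
      pinv_mul_conjTranspose_pinv_mul_conjTranspose hA, Matrix.mul_assoc _ Bᴴ,
      conjTranspose_mul_one_sub_mul_pinv hB, Matrix.mul_zero, sub_zero, Matrix.mul_sub,
      Matrix.mul_one]
  rw [h₁, h₂]
  abel

theorem norm_pinv_sub_pinv_sq_le (hA : IsUnit (Aᴴ * A)) (hB : IsUnit (Bᴴ * B)) :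
    ‖pinv A - pinv B‖ ^ 2 ≤
      (‖A - B‖ * ‖pinv A‖ * ‖pinv B‖) ^ 2 + (‖A - B‖ * ‖pinv A‖ * ‖pinv A‖) ^ 2 := by
  have hP := (isStarProjection_mul_pinv hB).one_sub
  rw [pinv_sub_pinv hA hB]
  refine (l2_opNorm_add_sq_le_of_mul_conjTranspose_eq_zero ?_).trans
    (add_le_add (pow_le_pow_left₀ (norm_nonneg _) ?_ 2) (pow_le_pow_left₀ (norm_nonneg _) ?_ 2))
  · rw [conjTranspose_mul _ (1 - B * pinv B), conjTranspose_sub, conjTranspose_one,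
      conjTranspose_mul_pinv, Matrix.mul_assoc,
      ← Matrix.mul_assoc (pinv B), pinv_mul_one_sub_mul_pinv hB, Matrix.zero_mul,
      Matrix.mul_zero]
  · calc ‖pinv A * (B - A) * pinv B‖ ≤ ‖pinv A‖ * ‖B - A‖ * ‖pinv B‖ := by
          grw [l2_opNorm_mul, l2_opNorm_mul]
      _ = ‖A - B‖ * ‖pinv A‖ * ‖pinv B‖ := by rw [norm_sub_rev]; ring
  · calc ‖pinv A * (pinv A)ᴴ * (A - B)ᴴ * (1 - B * pinv B)‖
          ≤ ‖pinv A‖ * ‖(pinv A)ᴴ‖ * ‖(A - B)ᴴ‖ * ‖1 - B * pinv B‖ := by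
          grw [l2_opNorm_mul, l2_opNorm_mul, l2_opNorm_mul]
      _ ≤ ‖A - B‖ * ‖pinv A‖ * ‖pinv A‖ := by
          grw [hP.norm_le]
          rw [l2_opNorm_conjTranspose, l2_opNorm_conjTranspose, mul_one, mul_comm, mul_assoc]

theorem isUnit_pinv_mul_add (hA : IsUnit (Aᴴ * A)) (hE : ‖E‖ * ‖pinv A‖ < 1) :
    IsUnit (pinv A * (A + E)) := by
  rw [Matrix.mul_add, pinv_mul_self hA, ← sub_neg_eq_add]
  refine isUnit_one_sub_of_norm_lt_one ?_
  rw [norm_neg]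
  exact (l2_opNorm_mul _ _).trans_lt (by rwa [mul_comm])

open scoped ComplexOrder in
theorem isUnit_conjTranspose_mul_self_add (hA : IsUnit (Aᴴ * A)) (hE : ‖E‖ * ‖pinv A‖ < 1) :
    IsUnit ((A + E)ᴴ * (A + E)) :=
  isUnit_conjTranspose_mul_self_of_rank_eq_card
    (rank_eq_card_of_isUnit_mul (isUnit_pinv_mul_add hA hE))

theorem one_sub_mul_norm_pinv_add_le (hA : IsUnit (Aᴴ * A))
    (hAE : IsUnit ((A + E)ᴴ * (A + E))) :
    (1 - ‖E‖ * ‖pinv A‖) * ‖pinv (A + E)‖ ≤ ‖pinv A‖ := by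
  have h : pinv (A + E) = pinv A * ((A + E) * pinv (A + E)) - pinv A * E * pinv (A + E) := by
    rw [← Matrix.mul_assoc, Matrix.mul_add, pinv_mul_self hA, Matrix.add_mul, Matrix.one_mul,
      add_sub_cancel_right]
  have hP := (isStarProjection_mul_pinv hAE).norm_le
  have hle : ‖pinv (A + E)‖ ≤ ‖pinv A‖ + ‖pinv A‖ * ‖E‖ * ‖pinv (A + E)‖ := by
    calc ‖pinv (A + E)‖
        = ‖pinv A * ((A + E) * pinv (A + E)) - pinv A * E * pinv (A + E)‖ := congrArg norm h
      _ ≤ ‖pinv A * ((A + E) * pinv (A + E))‖ + ‖pinv A * E * pinv (A + E)‖ := norm_sub_le _ _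
      _ ≤ ‖pinv A‖ * 1 + ‖pinv A‖ * ‖E‖ * ‖pinv (A + E)‖ := by
          grw [l2_opNorm_mul (pinv A) ((A + E) * _), hP, l2_opNorm_mul (pinv A * E),
            l2_opNorm_mul (pinv A) E]
      _ = _ := by rw [mul_one]
  linarith

end Pinv

theorem rre_pinv_difference_bound_general (m n : ℕ)
    (A E : Matrix (Fin m) (Fin n) ℂ) (hA : A.rank = n)
    (hΔ : ‖E‖ * ‖pinv A‖ < 1) :
    ‖pinv (A + E) - pinv A‖ ≤
      Real.sqrt 2 * (‖E‖ * ‖pinv A‖ / (1 - ‖E‖ * ‖pinv A‖)) * ‖pinv A‖ := by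
  have hAu : IsUnit (Aᴴ * A) := by
    open scoped ComplexOrder in
    exact isUnit_conjTranspose_mul_self_of_rank_eq_card (by rw [hA, Fintype.card_fin])
  have hAEu := isUnit_conjTranspose_mul_self_add hAu hΔ
  have hsq := norm_pinv_sub_pinv_sq_le hAu hAEu
  have hβ := one_sub_mul_norm_pinv_add_le hAu hAEu
  rw [show A - (A + E) = -E by abel, norm_neg] at hsq
  have hδ : 0 < 1 - ‖E‖ * ‖pinv A‖ := by linarith
  rw [norm_sub_rev, ← pow_le_pow_iff_left₀ (norm_nonneg _) (by positivity) two_ne_zero]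
  have he := norm_nonneg E
  have hα₀ := norm_nonneg (pinv A)
  have hβ₀ := norm_nonneg (pinv (A + E))
  have hβ' : ‖pinv (A + E)‖ ≤ ‖pinv A‖ / (1 - ‖E‖ * ‖pinv A‖) := by
    rwa [le_div_iff₀ hδ, mul_comm]
  have hα : ‖pinv A‖ ≤ ‖pinv A‖ / (1 - ‖E‖ * ‖pinv A‖) :=
    le_div_self hα₀ hδ (sub_le_self 1 (mul_nonneg he hα₀))
  generalize ‖E‖ = e, ‖pinv A‖ = α, ‖pinv (A + E)‖ = β at *
  calc _ ≤ (e * α * β) ^ 2 + (e * α * α) ^ 2 := hsq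
    _ ≤ (e * α * (α / (1 - e * α))) ^ 2 + (e * α * (α / (1 - e * α))) ^ 2 := by gcongr
    _ = (Real.sqrt 2 * (e * α / (1 - e * α)) * α) ^ 2 := by
        simp only [mul_pow, Real.sq_sqrt zero_le_two]; ring

/-- If `A, E` are `m×n` complex matrices, `m ≥ n`, `rank A = n`, and
`Δ = ‖E‖·‖A⁺‖ < 1`, then `H = (A+E)⁺ − A⁺` satisfies
`‖H‖ ≤ √2 · (Δ/(1−Δ)) · ‖A⁺‖`. -/
theorem rre_pinv_difference_bound (m n : ℕ) (hmn : n ≤ m)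
    (A E : Matrix (Fin m) (Fin n) ℂ) (hA : A.rank = n)
    (hΔ : ‖E‖ * ‖pinv A‖ < 1) :
    ‖pinv (A + E) - pinv A‖ ≤
      Real.sqrt 2 * (‖E‖ * ‖pinv A‖ / (1 - ‖E‖ * ‖pinv A‖)) * ‖pinv A‖ :=
  rre_pinv_difference_bound_general m n A E hA hΔ
end

section
/- Under the nonlinear fixed-point iteration setup, for all integers n ≥ 0 and i ≥ 1, the iteration errors satisfy ‖ε_{n+i} − F̃ⁱ ε_n‖ ≤ C_i ‖ε_n‖², where C_i = a·L^{i−1}·(1 − Lⁱ)/(1 − L). -/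
/-! Writing `ε_m = x_m - s`, the map `f` is a contraction towards its fixed point on the ball,
so the orbit never leaves the ball and `‖ε_{n+k}‖ ≤ Lᵏ ‖ε_n‖`. The error of the linearized
iteration obeys
`ε_{n+k+1} - F̃ᵏ⁺¹ ε_n = (ε_{n+k+1} - F̃ ε_{n+k}) + F̃ (ε_{n+k} - F̃ᵏ ε_n)`,
whose first term is at most `a L²ᵏ ‖ε_n‖²` and whose second is `L` times the previous bound;
summing these contributions gives `C_{k+1} = a Lᵏ (1 + L + ⋯ + Lᵏ)`. -/

open Finset

section Orbit

variable {E : Type*} [SeminormedAddCommGroup E] {f : E → E} {s : E} {δ L : ℝ}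

theorem norm_apply_sub_fixedPoint_le (hfs : f s = s)
    (hLip : ∀ x y : E, ‖x - s‖ ≤ δ → ‖y - s‖ ≤ δ → ‖f x - f y‖ ≤ L * ‖x - y‖)
    {x : E} (hx : ‖x - s‖ ≤ δ) : ‖f x - s‖ ≤ L * ‖x - s‖ := by
  have hs : ‖s - s‖ ≤ δ := by simpa using (norm_nonneg _).trans hx
  simpa only [hfs] using hLip x s hx hs

theorem norm_orbit_sub_fixedPoint_le (hfs : f s = s) (hL1 : L ≤ 1)
    (hLip : ∀ x y : E, ‖x - s‖ ≤ δ → ‖y - s‖ ≤ δ → ‖f x - f y‖ ≤ L * ‖x - y‖)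
    {x : ℕ → E} (hx0 : ‖x 0 - s‖ ≤ δ) (hxit : ∀ m, x (m + 1) = f (x m)) (m : ℕ) :
    ‖x m - s‖ ≤ δ := by
  induction m with
  | zero => exact hx0
  | succ k ih =>
    calc ‖x (k + 1) - s‖ ≤ L * ‖x k - s‖ := hxit k ▸ norm_apply_sub_fixedPoint_le hfs hLip ih
      _ ≤ ‖x k - s‖ := mul_le_of_le_one_left (norm_nonneg _) hL1
      _ ≤ δ := ih

end Orbit

section QuadraticError

variable {𝕜 E : Type*} [NontriviallyNormedField 𝕜] [SeminormedAddCommGroup E] [NormedSpace 𝕜 E]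
  {F : E →L[𝕜] E} {L a : ℝ} {ε : ℕ → E}

theorem norm_sub_pow_apply_le_of_quadratic (hF : ‖F‖ ≤ L) (ha : 0 ≤ a)
    (hcontr : ∀ m, ‖ε (m + 1)‖ ≤ L * ‖ε m‖)
    (hquad : ∀ m, ‖ε (m + 1) - F (ε m)‖ ≤ a * ‖ε m‖ ^ 2) (n k : ℕ) :
    ‖ε (n + (k + 1)) - (F ^ (k + 1)) (ε n)‖ ≤
      a * L ^ k * (∑ j ∈ range (k + 1), L ^ j) * ‖ε n‖ ^ 2 := by
  have hL : 0 ≤ L := (norm_nonneg F).trans hF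
  induction k with
  | zero => simpa using hquad n
  | succ k ih =>
    have hdecay : ‖ε (n + (k + 1))‖ ≤ L ^ (k + 1) * ‖ε n‖ :=
      le_geom (u := fun j ↦ ‖ε (n + j)‖) hL (k + 1) fun j _ ↦ hcontr (n + j)
    have hsplit : ε (n + (k + 1) + 1) - (F ^ (k + 2)) (ε n) =
        (ε (n + (k + 1) + 1) - F (ε (n + (k + 1))))
          + F (ε (n + (k + 1)) - (F ^ (k + 1)) (ε n)) := by
      rw [pow_succ' F (k + 1), mul_apply_eq_comp, map_sub]
      abel
    calc ‖ε (n + (k + 1) + 1) - (F ^ (k + 2)) (ε n)‖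
        ≤ a * ‖ε (n + (k + 1))‖ ^ 2 + ‖F‖ * ‖ε (n + (k + 1)) - (F ^ (k + 1)) (ε n)‖ := by
          rw [hsplit]
          exact (norm_add_le _ _).trans (add_le_add (hquad _) (F.le_opNorm _))
      _ ≤ a * (L ^ (k + 1) * ‖ε n‖) ^ 2
            + L * (a * L ^ k * (∑ j ∈ range (k + 1), L ^ j) * ‖ε n‖ ^ 2) := by
          gcongr
      _ = a * L ^ (k + 1) * (∑ j ∈ range (k + 2), L ^ j) * ‖ε n‖ ^ 2 := by
          rw [sum_range_succ _ (k + 1)]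
          ring

end QuadraticError

theorem rre_error_expansion_general
    (N : ℕ) (s : EuclideanSpace ℂ (Fin N)) (δ : ℝ)
    (L a : ℝ) (hL1 : L < 1) (ha : 0 < a)
    (f : EuclideanSpace ℂ (Fin N) → EuclideanSpace ℂ (Fin N)) (hfs : f s = s)
    (hLip : ∀ x y : EuclideanSpace ℂ (Fin N),
      ‖x - s‖ ≤ δ → ‖y - s‖ ≤ δ → ‖f x - f y‖ ≤ L * ‖x - y‖)
    (F : EuclideanSpace ℂ (Fin N) →L[ℂ] EuclideanSpace ℂ (Fin N)) (hF : ‖F‖ ≤ L)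
    (hTay : ∀ x : EuclideanSpace ℂ (Fin N),
      ‖x - s‖ ≤ δ → ‖f x - s - F (x - s)‖ ≤ a * ‖x - s‖ ^ 2)
    (x : ℕ → EuclideanSpace ℂ (Fin N)) (hx0 : ‖x 0 - s‖ ≤ δ)
    (hxit : ∀ m, x (m + 1) = f (x m)) :
    ∀ n i : ℕ, 1 ≤ i →
      ‖(x (n + i) - s) - (F ^ i) (x n - s)‖ ≤
        a * L ^ (i - 1) * (1 - L ^ i) / (1 - L) * ‖x n - s‖ ^ 2 := by
  intro n i hi
  obtain ⟨k, rfl⟩ := Nat.exists_eq_add_of_le' hi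
  have hball := norm_orbit_sub_fixedPoint_le hfs hL1.le hLip hx0 hxit
  have hbound := norm_sub_pow_apply_le_of_quadratic (ε := fun m ↦ x m - s) hF ha.le
    (fun m ↦ hxit m ▸ norm_apply_sub_fixedPoint_le hfs hLip (hball m))
    (fun m ↦ hxit m ▸ hTay (x m) (hball m)) n k
  have hgeom : ∑ j ∈ range (k + 1), L ^ j = (1 - L ^ (k + 1)) / (1 - L) := by
    rw [geom_sum_eq hL1.ne, ← neg_div_neg_eq, neg_sub, neg_sub]
  rwa [Nat.add_sub_cancel, mul_div_assoc, ← hgeom]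

/-- Under the nonlinear fixed-point iteration setup, for all `n ≥ 0` and
`i ≥ 1`, the errors `ε_m = x_m − s` satisfy `‖ε_{n+i} − F̃ⁱ ε_n‖ ≤ C_i ‖ε_n‖²`, where
`C_i = a·L^{i−1}·(1 − Lⁱ)/(1 − L)`. -/
theorem rre_error_expansion
    (N : ℕ) (hN : 1 ≤ N) (s : EuclideanSpace ℂ (Fin N)) (δ : ℝ) (hδ : 0 < δ)
    (L a : ℝ) (hL0 : 0 < L) (hL1 : L < 1) (ha : 0 < a)
    (f : EuclideanSpace ℂ (Fin N) → EuclideanSpace ℂ (Fin N)) (hfs : f s = s)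
    (hLip : ∀ x y : EuclideanSpace ℂ (Fin N),
      ‖x - s‖ ≤ δ → ‖y - s‖ ≤ δ → ‖f x - f y‖ ≤ L * ‖x - y‖)
    (F : EuclideanSpace ℂ (Fin N) →L[ℂ] EuclideanSpace ℂ (Fin N)) (hF : ‖F‖ ≤ L)
    (hTay : ∀ x : EuclideanSpace ℂ (Fin N),
      ‖x - s‖ ≤ δ → ‖f x - s - F (x - s)‖ ≤ a * ‖x - s‖ ^ 2)
    (x : ℕ → EuclideanSpace ℂ (Fin N)) (hx0 : ‖x 0 - s‖ ≤ δ)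
    (hxit : ∀ m, x (m + 1) = f (x m)) :
    ∀ n i : ℕ, 1 ≤ i →
      ‖(x (n + i) - s) - (F ^ i) (x n - s)‖ ≤
        a * L ^ (i - 1) * (1 - L ^ i) / (1 - L) * ‖x n - s‖ ^ 2 :=
  rre_error_expansion_general N s δ L a hL1 ha f hfs hLip F hF hTay x hx0 hxit
end

section
/- Under the nonlinear fixed-point iteration setup, for all integers n ≥ 0 and i ≥ 0, the first differences satisfy ‖u_{n+i} − F̃ⁱ(F̃ − I)ε_n‖ ≤ (C_i + C_{i+1}) ‖ε_n‖². -/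
/-- `C₀ = 0` and `C_i = a·L^{i−1}·(1 − Lⁱ)/(1 − L)` for `i ≥ 1`. -/
noncomputable def Cconst (a L : ℝ) : ℕ → ℝ
  | 0 => 0
  | i + 1 => a * L ^ i * (1 - L ^ (i + 1)) / (1 - L)

lemma Cconst_rec (a L : ℝ) (hL1 : L < 1) (i : ℕ) :
    a * (L ^ i) ^ 2 + L * Cconst a L i = Cconst a L (i + 1) := by
  have h1L : (1 : ℝ) - L ≠ 0 := by linarith
  cases i with
  | zero => simp [Cconst]; field_simp
  | succ j => simp only [Cconst]; field_simp; ring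

/-- Under the nonlinear fixed-point iteration setup, for all `n, i ≥ 0`,
the first differences `u_m = x_{m+1} − x_m` satisfy
`‖u_{n+i} − F̃ⁱ(F̃ − I) ε_n‖ ≤ (C_i + C_{i+1}) ‖ε_n‖²`. -/
theorem rre_first_difference_expansion
    (N : ℕ) (hN : 1 ≤ N) (s : EuclideanSpace ℂ (Fin N)) (δ : ℝ) (hδ : 0 < δ)
    (L a : ℝ) (hL0 : 0 < L) (hL1 : L < 1) (ha : 0 < a)
    (f : EuclideanSpace ℂ (Fin N) → EuclideanSpace ℂ (Fin N)) (hfs : f s = s)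
    (hLip : ∀ x y : EuclideanSpace ℂ (Fin N),
      ‖x - s‖ ≤ δ → ‖y - s‖ ≤ δ → ‖f x - f y‖ ≤ L * ‖x - y‖)
    (F : EuclideanSpace ℂ (Fin N) →L[ℂ] EuclideanSpace ℂ (Fin N)) (hF : ‖F‖ ≤ L)
    (hTay : ∀ x : EuclideanSpace ℂ (Fin N),
      ‖x - s‖ ≤ δ → ‖f x - s - F (x - s)‖ ≤ a * ‖x - s‖ ^ 2)
    (x : ℕ → EuclideanSpace ℂ (Fin N)) (hx0 : ‖x 0 - s‖ ≤ δ)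
    (hxit : ∀ m, x (m + 1) = f (x m)) :
    ∀ n i : ℕ,
      ‖(x (n + i + 1) - x (n + i)) - (F ^ i * (F - 1)) (x n - s)‖ ≤
        (Cconst a L i + Cconst a L (i + 1)) * ‖x n - s‖ ^ 2 := by
  have hss : ‖s - s‖ ≤ δ := by simp; linarith
  have hstep : ∀ m, ‖x m - s‖ ≤ δ → ‖x (m + 1) - s‖ ≤ L * ‖x m - s‖ := by
    intro m h
    rw [hxit]
    calc ‖f (x m) - s‖ = ‖f (x m) - f s‖ := by rw [hfs]
      _ ≤ L * ‖x m - s‖ := hLip _ _ h hss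
  have hmem : ∀ m, ‖x m - s‖ ≤ δ := by
    intro m
    induction m with
    | zero => exact hx0
    | succ k ih =>
      have := hstep k ih
      nlinarith [norm_nonneg (x k - s)]
  have hgeom : ∀ n i, ‖x (n + i) - s‖ ≤ L ^ i * ‖x n - s‖ := by
    intro n i
    induction i with
    | zero => simp
    | succ k ih =>
      have h1 := hstep (n + k) (hmem _)
      calc ‖x (n + (k + 1)) - s‖ ≤ L * ‖x (n + k) - s‖ := h1
        _ ≤ L * (L ^ k * ‖x n - s‖) := by nlinarith
        _ = L ^ (k + 1) * ‖x n - s‖ := by ring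
  have hTay' : ∀ m, ‖x (m + 1) - s - F (x m - s)‖ ≤ a * ‖x m - s‖ ^ 2 := by
    intro m; rw [hxit]; exact hTay _ (hmem m)
  have key : ∀ n i, ‖x (n + i) - s - (F ^ i) (x n - s)‖ ≤ Cconst a L i * ‖x n - s‖ ^ 2 := by
    intro n i
    induction i with
    | zero => simp [Cconst]
    | succ k ih =>
      have h1 := hTay' (n + k)
      have h2 : ‖F ((x (n + k) - s) - (F ^ k) (x n - s))‖
          ≤ L * (Cconst a L k * ‖x n - s‖ ^ 2) := by
        calc ‖F ((x (n + k) - s) - (F ^ k) (x n - s))‖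
            ≤ ‖F‖ * ‖(x (n + k) - s) - (F ^ k) (x n - s)‖ := F.le_opNorm _
          _ ≤ L * (Cconst a L k * ‖x n - s‖ ^ 2) := by
              apply mul_le_mul hF ih (norm_nonneg _) (le_of_lt hL0)
      have heq : x (n + (k + 1)) - s - (F ^ (k + 1)) (x n - s)
          = (x (n + k + 1) - s - F (x (n + k) - s))
            + F ((x (n + k) - s) - (F ^ k) (x n - s)) := by
        simp only [pow_succ', ContinuousLinearMap.mul_apply, map_sub]
        abel_nf
      rw [heq]
      have hg := hgeom n k
      have ha2 : a * ‖x (n + k) - s‖ ^ 2 ≤ a * (L ^ k) ^ 2 * ‖x n - s‖ ^ 2 := by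
        have hsq := mul_le_mul hg hg (norm_nonneg _) (by positivity)
        nlinarith [norm_nonneg (x (n + k) - s)]
      calc ‖_ + _‖ ≤ ‖x (n + k + 1) - s - F (x (n + k) - s)‖
            + ‖F ((x (n + k) - s) - (F ^ k) (x n - s))‖ := norm_add_le _ _
        _ ≤ a * (L ^ k) ^ 2 * ‖x n - s‖ ^ 2 + L * (Cconst a L k * ‖x n - s‖ ^ 2) := by
            have := le_trans h1 ha2; linarith
        _ = Cconst a L (k + 1) * ‖x n - s‖ ^ 2 := by
            rw [← Cconst_rec a L hL1 k]; ring
  intro n i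
  have h1 := key n i
  have h2 := key n (i + 1)
  have happ : (F ^ i * (F - 1)) (x n - s)
      = (F ^ (i + 1)) (x n - s) - (F ^ i) (x n - s) := by
    simp only [pow_succ, ContinuousLinearMap.mul_apply, ContinuousLinearMap.sub_apply,
      ContinuousLinearMap.one_apply, map_sub]
    abel
  have heq : (x (n + i + 1) - x (n + i)) - (F ^ i * (F - 1)) (x n - s)
      = (x (n + (i + 1)) - s - (F ^ (i + 1)) (x n - s))
        - (x (n + i) - s - (F ^ i) (x n - s)) := by
    rw [happ]
    have : n + (i + 1) = n + i + 1 := rfl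
    rw [this]
    abel
  rw [heq]
  calc ‖_ - _‖ ≤ ‖x (n + (i + 1)) - s - (F ^ (i + 1)) (x n - s)‖
        + ‖x (n + i) - s - (F ^ i) (x n - s)‖ := norm_sub_le _ _
    _ ≤ Cconst a L (i + 1) * ‖x n - s‖ ^ 2 + Cconst a L i * ‖x n - s‖ ^ 2 := by
        linarith
    _ = (Cconst a L i + Cconst a L (i + 1)) * ‖x n - s‖ ^ 2 := by ring
end

section
/- Under the nonlinear fixed-point iteration setup, for all integers n ≥ 0 and i ≥ 0, the second differences satisfy ‖w_{n+i} − F̃ⁱ(F̃ − I)² ε_n‖ ≤ (C_i + 2C_{i+1} + C_{i+2}) ‖ε_n‖². -/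
theorem Cconst_succ {a L : ℝ} (hL : L ≠ 1) (i : ℕ) :
    Cconst a L (i + 1) = a * L ^ (2 * i) + L * Cconst a L i := by
  have h1L : 1 - L ≠ 0 := sub_ne_zero.2 hL.symm
  cases i with
  | zero => simp [Cconst, h1L]
  | succ j =>
    simp only [Cconst]
    field_simp
    ring

section

variable {E : Type*} [SeminormedAddCommGroup E]

theorem norm_seq_sub_le_of_contracting {f : E → E} {s : E} {δ L : ℝ} (hL1 : L ≤ 1)
    (hf : ∀ y, ‖y - s‖ ≤ δ → ‖f y - s‖ ≤ L * ‖y - s‖)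
    {x : ℕ → E} (hx0 : ‖x 0 - s‖ ≤ δ) (hxit : ∀ m, x (m + 1) = f (x m)) :
    ∀ m, ‖x m - s‖ ≤ δ := by
  intro m
  induction m with
  | zero => exact hx0
  | succ m ih =>
    rw [hxit]
    calc ‖f (x m) - s‖ ≤ L * ‖x m - s‖ := hf _ ih
      _ ≤ 1 * δ := mul_le_mul hL1 ih (norm_nonneg _) zero_le_one
      _ = δ := one_mul δ

variable {𝕜 : Type*} [NontriviallyNormedField 𝕜] [NormedSpace 𝕜 E]

theorem norm_sub_pow_apply_le {F : E →L[𝕜] E} {a L : ℝ} (hF : ‖F‖ ≤ L) (hL1 : L ≠ 1)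
    (ha : 0 ≤ a) {e : ℕ → E} (hlin : ∀ m, ‖e (m + 1) - F (e m)‖ ≤ a * ‖e m‖ ^ 2)
    {n : ℕ} (hdecay : ∀ i, ‖e (n + i)‖ ≤ L ^ i * ‖e n‖) (i : ℕ) :
    ‖e (n + i) - (F ^ i) (e n)‖ ≤ Cconst a L i * ‖e n‖ ^ 2 := by
  induction i with
  | zero => simp [Cconst]
  | succ i ih =>
    have hsplit : e (n + (i + 1)) - (F ^ (i + 1)) (e n)
        = (e (n + i + 1) - F (e (n + i))) + F (e (n + i) - (F ^ i) (e n)) := by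
      rw [pow_succ', mul_apply_eq_comp, map_sub, ← add_assoc]
      abel
    calc ‖e (n + (i + 1)) - (F ^ (i + 1)) (e n)‖
        ≤ a * ‖e (n + i)‖ ^ 2 + ‖F‖ * ‖e (n + i) - (F ^ i) (e n)‖ := by
          rw [hsplit]
          exact (norm_add_le _ _).trans (add_le_add (hlin _) (F.le_opNorm _))
      _ ≤ a * (L ^ i * ‖e n‖) ^ 2 + L * (Cconst a L i * ‖e n‖ ^ 2) := by
          gcongr
          · exact hdecay i
          · exact (norm_nonneg F).trans hF
      _ = Cconst a L (i + 1) * ‖e n‖ ^ 2 := by rw [Cconst_succ hL1]; ring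

theorem norm_second_difference_sub_le {F : E →L[𝕜] E} {e : ℕ → E} {n : ℕ} {C : ℕ → ℝ}
    (hC : ∀ i, ‖e (n + i) - (F ^ i) (e n)‖ ≤ C i * ‖e n‖ ^ 2) (i : ℕ) :
    ‖((e (n + i + 2) - e (n + i + 1)) - (e (n + i + 1) - e (n + i)))
        - (F ^ i * (F - 1) ^ 2 : E →L[𝕜] E) (e n)‖
      ≤ (C i + 2 * C (i + 1) + C (i + 2)) * ‖e n‖ ^ 2 := by
  have hop : F ^ i * (F - 1) ^ 2 = (F ^ (i + 2) - F ^ (i + 1)) - (F ^ (i + 1) - F ^ i) := by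
    simp only [pow_succ, mul_sub, sub_mul]
    noncomm_ring
  set r : ℕ → E := fun j ↦ e (n + j) - (F ^ j) (e n) with hr
  have hsplit : ((e (n + i + 2) - e (n + i + 1)) - (e (n + i + 1) - e (n + i)))
      - (F ^ i * (F - 1) ^ 2 : E →L[𝕜] E) (e n) = (r (i + 2) - r (i + 1)) - (r (i + 1) - r i) := by
    simp only [hr, hop, sub_apply, ← add_assoc]
    abel
  calc ‖((e (n + i + 2) - e (n + i + 1)) - (e (n + i + 1) - e (n + i)))
        - (F ^ i * (F - 1) ^ 2 : E →L[𝕜] E) (e n)‖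
      ≤ (‖r (i + 2)‖ + ‖r (i + 1)‖) + (‖r (i + 1)‖ + ‖r i‖) := by
        rw [hsplit]
        exact (norm_sub_le _ _).trans (add_le_add (norm_sub_le _ _) (norm_sub_le _ _))
    _ ≤ (C (i + 2) * ‖e n‖ ^ 2 + C (i + 1) * ‖e n‖ ^ 2)
        + (C (i + 1) * ‖e n‖ ^ 2 + C i * ‖e n‖ ^ 2) := by
        gcongr <;> exact hC _
    _ = (C i + 2 * C (i + 1) + C (i + 2)) * ‖e n‖ ^ 2 := by ring

end

theorem rre_second_difference_expansion_general
    (N : ℕ) (s : EuclideanSpace ℂ (Fin N)) (δ : ℝ)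
    (L a : ℝ) (hL1 : L < 1) (ha : 0 < a)
    (f : EuclideanSpace ℂ (Fin N) → EuclideanSpace ℂ (Fin N)) (hfs : f s = s)
    (hLip : ∀ x y : EuclideanSpace ℂ (Fin N),
      ‖x - s‖ ≤ δ → ‖y - s‖ ≤ δ → ‖f x - f y‖ ≤ L * ‖x - y‖)
    (F : EuclideanSpace ℂ (Fin N) →L[ℂ] EuclideanSpace ℂ (Fin N)) (hF : ‖F‖ ≤ L)
    (hTay : ∀ x : EuclideanSpace ℂ (Fin N),
      ‖x - s‖ ≤ δ → ‖f x - s - F (x - s)‖ ≤ a * ‖x - s‖ ^ 2)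
    (x : ℕ → EuclideanSpace ℂ (Fin N)) (hx0 : ‖x 0 - s‖ ≤ δ)
    (hxit : ∀ m, x (m + 1) = f (x m)) :
    ∀ n i : ℕ,
      ‖((x (n + i + 2) - x (n + i + 1)) - (x (n + i + 1) - x (n + i)))
          - ((F ^ i * (F - 1) ^ 2 : EuclideanSpace ℂ (Fin N) →L[ℂ] EuclideanSpace ℂ (Fin N))) (x n - s)‖ ≤
        (Cconst a L i + 2 * Cconst a L (i + 1) + Cconst a L (i + 2)) * ‖x n - s‖ ^ 2 := by
  intro n i
  have hL0 : 0 ≤ L := (norm_nonneg F).trans hF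
  have hcontract : ∀ y, ‖y - s‖ ≤ δ → ‖f y - s‖ ≤ L * ‖y - s‖ := fun y hy ↦ by
    simpa only [hfs] using hLip y s hy (by simpa using (norm_nonneg _).trans hx0)
  have hball := norm_seq_sub_le_of_contracting hL1.le hcontract hx0 hxit
  have hdecay (i : ℕ) : ‖x (n + i) - s‖ ≤ L ^ i * ‖x n - s‖ :=
    le_geom (u := fun k ↦ ‖x (n + k) - s‖) hL0 i fun k _ ↦ by
      simpa only [← add_assoc, hxit] using hcontract _ (hball (n + k))
  have hlin (m : ℕ) : ‖(x (m + 1) - s) - F (x m - s)‖ ≤ a * ‖x m - s‖ ^ 2 := by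
    simpa only [hxit] using hTay _ (hball m)
  simpa only [sub_sub_sub_cancel_right] using
    norm_second_difference_sub_le (e := fun m ↦ x m - s)
      (norm_sub_pow_apply_le (e := fun m ↦ x m - s) hF hL1.ne ha.le hlin hdecay) i

/-- Under the nonlinear fixed-point iteration setup, for all `n, i ≥ 0`,
the second differences `w_m = u_{m+1} − u_m` satisfy
`‖w_{n+i} − F̃ⁱ(F̃ − I)² ε_n‖ ≤ (C_i + 2C_{i+1} + C_{i+2}) ‖ε_n‖²`. -/
theorem rre_second_difference_expansion
    (N : ℕ) (hN : 1 ≤ N) (s : EuclideanSpace ℂ (Fin N)) (δ : ℝ) (hδ : 0 < δ)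
    (L a : ℝ) (hL0 : 0 < L) (hL1 : L < 1) (ha : 0 < a)
    (f : EuclideanSpace ℂ (Fin N) → EuclideanSpace ℂ (Fin N)) (hfs : f s = s)
    (hLip : ∀ x y : EuclideanSpace ℂ (Fin N),
      ‖x - s‖ ≤ δ → ‖y - s‖ ≤ δ → ‖f x - f y‖ ≤ L * ‖x - y‖)
    (F : EuclideanSpace ℂ (Fin N) →L[ℂ] EuclideanSpace ℂ (Fin N)) (hF : ‖F‖ ≤ L)
    (hTay : ∀ x : EuclideanSpace ℂ (Fin N),
      ‖x - s‖ ≤ δ → ‖f x - s - F (x - s)‖ ≤ a * ‖x - s‖ ^ 2)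
    (x : ℕ → EuclideanSpace ℂ (Fin N)) (hx0 : ‖x 0 - s‖ ≤ δ)
    (hxit : ∀ m, x (m + 1) = f (x m)) :
    ∀ n i : ℕ,
      ‖((x (n + i + 2) - x (n + i + 1)) - (x (n + i + 1) - x (n + i)))
          - ((F ^ i * (F - 1) ^ 2 : EuclideanSpace ℂ (Fin N) →L[ℂ] EuclideanSpace ℂ (Fin N))) (x n - s)‖ ≤
        (Cconst a L i + 2 * Cconst a L (i + 1) + Cconst a L (i + 2)) * ‖x n - s‖ ^ 2 :=
  rre_second_difference_expansion_general N s δ L a hL1 ha f hfs hLip F hF hTay x hx0 hxit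
end

section
/- Under the nonlinear fixed-point iteration setup, for any n ≥ 0 and k ≥ 1, the N×k matrix W with columns w_n, w_{n+1}, …, w_{n+k−1} satisfies ‖W‖ ≤ √((1+L)³/(1−L)) · ‖ε_n‖ in the operator (spectral) norm; the same bound holds for the N×k matrix W̃ with columns w̃_{n+j} = F̃ʲ(F̃ − I)² ε_n, j = 0,…,k−1. In particular these bounds are independent of k. -/
/-!
Every column of either matrix has norm at most `(1 + L)² Lʲ ‖ε_n‖`: for `W` by the triangle
inequality on `w_{n+j} = ε_{n+j+2} - 2 ε_{n+j+1} + ε_{n+j}` and `‖ε_{n+i}‖ ≤ Lⁱ ‖ε_n‖`, for `W̃`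
from `‖F̃‖ ≤ L` and `‖F̃ - I‖ ≤ 1 + L`. Bounding the spectral norm by the Frobenius norm,
`‖W‖² ≤ (1 + L)⁴ ‖ε_n‖² ∑ⱼ L²ʲ ≤ (1 + L)⁴ ‖ε_n‖² / (1 - L²) = (1 + L)³ / (1 - L) · ‖ε_n‖²`.
-/

open scoped Matrix Matrix.Norms.L2Operator

open Finset

theorem Matrix.l2_opNorm_of_cols_le_sqrt_sum_norm_sq {𝕜 : Type*} [RCLike 𝕜] {m n : Type*}
    [Fintype m] [Fintype n] [DecidableEq n] (v : n → EuclideanSpace 𝕜 m) :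
    ‖Matrix.of fun i j => v j i‖ ≤ √(∑ j, ‖v j‖ ^ 2) := by
  rw [Matrix.l2_opNorm_def]
  refine ContinuousLinearMap.opNorm_le_bound _ (Real.sqrt_nonneg _) fun y => ?_
  have hcols : Matrix.toEuclideanLin (Matrix.of fun i j => v j i) y = ∑ j, y j • v j := by
    ext i
    simp [Matrix.mulVec, dotProduct, mul_comm]
  calc ‖Matrix.toEuclideanLin (Matrix.of fun i j => v j i) y‖
      = ‖∑ j, y j • v j‖ := by rw [hcols]
    _ ≤ ∑ j, ‖y j‖ * ‖v j‖ := (norm_sum_le _ _).trans_eq (by simp only [norm_smul])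
    _ ≤ √(∑ j, ‖y j‖ ^ 2) * √(∑ j, ‖v j‖ ^ 2) := Real.sum_mul_le_sqrt_mul_sqrt _ _ _
    _ = √(∑ j, ‖v j‖ ^ 2) * ‖y‖ := by rw [EuclideanSpace.norm_eq, mul_comm]

theorem Matrix.l2_opNorm_of_cols_le_of_norm_le_geometric {𝕜 : Type*} [RCLike 𝕜] {m : Type*} [Fintype m]
    {k : ℕ} {C L : ℝ} (hC : 0 ≤ C) (hL0 : 0 ≤ L) (hL1 : L < 1) (v : Fin k → EuclideanSpace 𝕜 m)
    (hv : ∀ j, ‖v j‖ ≤ C * L ^ (j : ℕ)) :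
    ‖Matrix.of fun i j => v j i‖ ≤ C / √(1 - L ^ 2) := by
  have hL2 : 0 < 1 - L ^ 2 := by nlinarith
  have hgeom : ∑ j : Fin k, (L ^ 2) ^ (j : ℕ) ≤ 1 / (1 - L ^ 2) := by
    have h := geom_sum_Ico_le_of_lt_one (m := 0) (n := k) (sq_nonneg L) (by nlinarith)
    rwa [← range_eq_Ico, pow_zero, ← Fin.sum_univ_eq_sum_range] at h
  have hsq : ∑ j, ‖v j‖ ^ 2 ≤ (C / √(1 - L ^ 2)) ^ 2 := calc
    ∑ j, ‖v j‖ ^ 2 ≤ ∑ j : Fin k, C ^ 2 * (L ^ 2) ^ (j : ℕ) := by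
      refine sum_le_sum fun j _ => ?_
      calc ‖v j‖ ^ 2 ≤ (C * L ^ (j : ℕ)) ^ 2 := by gcongr; exact hv j
        _ = C ^ 2 * (L ^ 2) ^ (j : ℕ) := by ring
    _ ≤ C ^ 2 * (1 / (1 - L ^ 2)) := by rw [← mul_sum]; gcongr
    _ = (C / √(1 - L ^ 2)) ^ 2 := by rw [div_pow, Real.sq_sqrt hL2.le, mul_one_div]
  calc ‖Matrix.of fun i j => v j i‖ ≤ √(∑ j, ‖v j‖ ^ 2) := Matrix.l2_opNorm_of_cols_le_sqrt_sum_norm_sq v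
    _ ≤ √((C / √(1 - L ^ 2)) ^ 2) := Real.sqrt_le_sqrt hsq
    _ = C / √(1 - L ^ 2) := Real.sqrt_sq (by positivity)

theorem one_add_sq_div_sqrt_one_sub_sq {L : ℝ} (hL0 : -1 < L) (hL1 : L < 1) :
    (1 + L) ^ 2 / √(1 - L ^ 2) = √((1 + L) ^ 3 / (1 - L)) := by
  have hfactor : (1 + L) ^ 3 / (1 - L) = ((1 + L) ^ 2) ^ 2 / (1 - L ^ 2) := by
    field_simp [show 1 - L ≠ 0 by linarith, show 1 - L ^ 2 ≠ 0 by nlinarith]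
    ring
  rw [hfactor, Real.sqrt_div' _ (by nlinarith), Real.sqrt_sq (by positivity)]

section Orbit

variable {E : Type*} [SeminormedAddCommGroup E] {f : E → E} {s : E} {δ L : ℝ} {x : ℕ → E}

theorem norm_orbit_sub_le_pow_mul (hL0 : 0 ≤ L) (hL1 : L ≤ 1)
    (hf : ∀ y, ‖y - s‖ ≤ δ → ‖f y - s‖ ≤ L * ‖y - s‖)
    (hx0 : ‖x 0 - s‖ ≤ δ) (hx : ∀ m, x (m + 1) = f (x m)) (n i : ℕ) :
    ‖x (n + i) - s‖ ≤ L ^ i * ‖x n - s‖ := by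
  have hball : ∀ m, ‖x m - s‖ ≤ δ := by
    intro m
    induction m with
    | zero => exact hx0
    | succ m ih =>
      calc ‖x (m + 1) - s‖ ≤ L * ‖x m - s‖ := hx m ▸ hf _ ih
        _ ≤ 1 * δ := mul_le_mul hL1 ih (norm_nonneg _) zero_le_one
        _ = δ := one_mul δ
  exact le_geom (u := fun i => ‖x (n + i) - s‖) hL0 i fun j _ =>
    (hx (n + j)).symm ▸ hf _ (hball (n + j))

theorem norm_second_diff_le (x : ℕ → E) (s : E) (m : ℕ) :
    ‖(x (m + 2) - x (m + 1)) - (x (m + 1) - x m)‖ ≤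
      ‖x (m + 2) - s‖ + 2 * ‖x (m + 1) - s‖ + ‖x m - s‖ := by
  have hcentre : (x (m + 2) - x (m + 1)) - (x (m + 1) - x m) =
      ((x (m + 2) - s) - (x (m + 1) - s)) - ((x (m + 1) - s) - (x m - s)) := by abel
  rw [hcentre]
  linarith [norm_sub_le ((x (m + 2) - s) - (x (m + 1) - s)) ((x (m + 1) - s) - (x m - s)),
    norm_sub_le (x (m + 2) - s) (x (m + 1) - s), norm_sub_le (x (m + 1) - s) (x m - s)]

theorem norm_second_diff_orbit_le (hL0 : 0 ≤ L) (hL1 : L ≤ 1)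
    (hf : ∀ y, ‖y - s‖ ≤ δ → ‖f y - s‖ ≤ L * ‖y - s‖)
    (hx0 : ‖x 0 - s‖ ≤ δ) (hx : ∀ m, x (m + 1) = f (x m)) (n j : ℕ) :
    ‖(x (n + j + 2) - x (n + j + 1)) - (x (n + j + 1) - x (n + j))‖ ≤
      (1 + L) ^ 2 * ‖x n - s‖ * L ^ j := by
  have hpow := norm_orbit_sub_le_pow_mul hL0 hL1 hf hx0 hx n
  calc _ ≤ ‖x (n + (j + 2)) - s‖ + 2 * ‖x (n + (j + 1)) - s‖ + ‖x (n + j) - s‖ :=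
        norm_second_diff_le x s (n + j)
    _ ≤ L ^ (j + 2) * ‖x n - s‖ + 2 * (L ^ (j + 1) * ‖x n - s‖) + L ^ j * ‖x n - s‖ := by
        gcongr <;> apply hpow
    _ = (1 + L) ^ 2 * ‖x n - s‖ * L ^ j := by ring

end Orbit

namespace ContinuousLinearMap

variable {𝕜 E : Type*} [NontriviallyNormedField 𝕜] [SeminormedAddCommGroup E] [NormedSpace 𝕜 E]
  {F : E →L[𝕜] E} {L : ℝ}

theorem norm_pow_apply_le (hF : ‖F‖ ≤ L) (j : ℕ) (v : E) : ‖(F ^ j) v‖ ≤ L ^ j * ‖v‖ := by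
  induction j with
  | zero => simp
  | succ j ih =>
    calc ‖(F ^ (j + 1)) v‖ = ‖F ((F ^ j) v)‖ := by rw [pow_succ', mul_apply_eq_comp]
      _ ≤ L * (L ^ j * ‖v‖) :=
          (F.le_of_opNorm_le hF _).trans (by gcongr; exact (norm_nonneg F).trans hF)
      _ = L ^ (j + 1) * ‖v‖ := by ring

theorem norm_sub_one_apply_le (hF : ‖F‖ ≤ L) (v : E) : ‖(F - 1) v‖ ≤ (1 + L) * ‖v‖ := by
  calc ‖(F - 1) v‖ = ‖F v - v‖ := rfl
    _ ≤ ‖F v‖ + ‖v‖ := norm_sub_le _ _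
    _ ≤ L * ‖v‖ + ‖v‖ := by gcongr; exact F.le_of_opNorm_le hF v
    _ = (1 + L) * ‖v‖ := by ring

theorem norm_pow_mul_sub_one_sq_apply_le (hF : ‖F‖ ≤ L) (j : ℕ) (v : E) :
    ‖(F ^ j * (F - 1) ^ 2 : E →L[𝕜] E) v‖ ≤ (1 + L) ^ 2 * ‖v‖ * L ^ j := by
  have hL : 0 ≤ L := (norm_nonneg F).trans hF
  calc ‖(F ^ j * (F - 1) ^ 2 : E →L[𝕜] E) v‖ = ‖(F ^ j) ((F - 1) ((F - 1) v))‖ := by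
        rw [mul_apply_eq_comp, sq, mul_apply_eq_comp]
    _ ≤ L ^ j * ‖(F - 1) ((F - 1) v)‖ := norm_pow_apply_le hF j _
    _ ≤ L ^ j * ((1 + L) * ‖(F - 1) v‖) := by gcongr; exact norm_sub_one_apply_le hF _
    _ ≤ L ^ j * ((1 + L) * ((1 + L) * ‖v‖)) := by gcongr; exact norm_sub_one_apply_le hF v
    _ = (1 + L) ^ 2 * ‖v‖ * L ^ j := by ring

end ContinuousLinearMap

theorem rre_W_matrix_norm_bound_general
    (N : ℕ) (s : EuclideanSpace ℂ (Fin N)) (δ : ℝ)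
    (L : ℝ) (hL0 : 0 < L) (hL1 : L < 1)
    (f : EuclideanSpace ℂ (Fin N) → EuclideanSpace ℂ (Fin N)) (hfs : f s = s)
    (hLip : ∀ x y : EuclideanSpace ℂ (Fin N),
      ‖x - s‖ ≤ δ → ‖y - s‖ ≤ δ → ‖f x - f y‖ ≤ L * ‖x - y‖)
    (F : EuclideanSpace ℂ (Fin N) →L[ℂ] EuclideanSpace ℂ (Fin N)) (hF : ‖F‖ ≤ L)
    (x : ℕ → EuclideanSpace ℂ (Fin N)) (hx0 : ‖x 0 - s‖ ≤ δ)
    (hxit : ∀ m, x (m + 1) = f (x m)) :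
    ∀ n k : ℕ, 1 ≤ k →
      ‖(Matrix.of fun (p : Fin N) (j : Fin k) =>
          ((x (n + (j : ℕ) + 2) - x (n + (j : ℕ) + 1))
            - (x (n + (j : ℕ) + 1) - x (n + (j : ℕ)))) p)‖ ≤
        Real.sqrt ((1 + L) ^ 3 / (1 - L)) * ‖x n - s‖ ∧
      ‖(Matrix.of fun (p : Fin N) (j : Fin k) =>
          (((F ^ (j : ℕ) * (F - 1) ^ 2 : EuclideanSpace ℂ (Fin N) →L[ℂ] EuclideanSpace ℂ (Fin N))) (x n - s)) p)‖ ≤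
        Real.sqrt ((1 + L) ^ 3 / (1 - L)) * ‖x n - s‖ := by
  intro n k _
  have hcontr : ∀ y, ‖y - s‖ ≤ δ → ‖f y - s‖ ≤ L * ‖y - s‖ := fun y hy => by
    simpa only [hfs] using hLip y s hy (by simpa using (norm_nonneg _).trans hx0)
  have hconst : (1 + L) ^ 2 * ‖x n - s‖ / √(1 - L ^ 2) =
      √((1 + L) ^ 3 / (1 - L)) * ‖x n - s‖ := by
    rw [mul_div_right_comm, one_add_sq_div_sqrt_one_sub_sq (by linarith) hL1]
  rw [← hconst]
  exact ⟨Matrix.l2_opNorm_of_cols_le_of_norm_le_geometric (by positivity) hL0.le hL1 _ fun j =>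
      norm_second_diff_orbit_le hL0.le hL1.le hcontr hx0 hxit n j,
    Matrix.l2_opNorm_of_cols_le_of_norm_le_geometric (by positivity) hL0.le hL1 _ fun j =>
      F.norm_pow_mul_sub_one_sq_apply_le hF j _⟩

/-- Under the nonlinear fixed-point iteration setup, for any `n ≥ 0` and
`k ≥ 1`, the `N×k` matrix `W` with columns `w_n, …, w_{n+k−1}` satisfies
`‖W‖ ≤ √((1+L)³/(1−L))·‖ε_n‖` in the `l₂` operator (spectral) norm, and so does the
matrix `W̃` with columns `w̃_{n+j} = F̃ʲ(F̃ − I)² ε_n`; the bounds are independent of `k`. -/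
theorem rre_W_matrix_norm_bound
    (N : ℕ) (hN : 1 ≤ N) (s : EuclideanSpace ℂ (Fin N)) (δ : ℝ) (hδ : 0 < δ)
    (L a : ℝ) (hL0 : 0 < L) (hL1 : L < 1) (ha : 0 < a)
    (f : EuclideanSpace ℂ (Fin N) → EuclideanSpace ℂ (Fin N)) (hfs : f s = s)
    (hLip : ∀ x y : EuclideanSpace ℂ (Fin N),
      ‖x - s‖ ≤ δ → ‖y - s‖ ≤ δ → ‖f x - f y‖ ≤ L * ‖x - y‖)
    (F : EuclideanSpace ℂ (Fin N) →L[ℂ] EuclideanSpace ℂ (Fin N)) (hF : ‖F‖ ≤ L)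
    (hTay : ∀ x : EuclideanSpace ℂ (Fin N),
      ‖x - s‖ ≤ δ → ‖f x - s - F (x - s)‖ ≤ a * ‖x - s‖ ^ 2)
    (x : ℕ → EuclideanSpace ℂ (Fin N)) (hx0 : ‖x 0 - s‖ ≤ δ)
    (hxit : ∀ m, x (m + 1) = f (x m)) :
    ∀ n k : ℕ, 1 ≤ k →
      ‖(Matrix.of fun (p : Fin N) (j : Fin k) =>
          ((x (n + (j : ℕ) + 2) - x (n + (j : ℕ) + 1))
            - (x (n + (j : ℕ) + 1) - x (n + (j : ℕ)))) p)‖ ≤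
        Real.sqrt ((1 + L) ^ 3 / (1 - L)) * ‖x n - s‖ ∧
      ‖(Matrix.of fun (p : Fin N) (j : Fin k) =>
          (((F ^ (j : ℕ) * (F - 1) ^ 2 : EuclideanSpace ℂ (Fin N) →L[ℂ] EuclideanSpace ℂ (Fin N))) (x n - s)) p)‖ ≤
        Real.sqrt ((1 + L) ^ 3 / (1 - L)) * ‖x n - s‖ :=
  rre_W_matrix_norm_bound_general N s δ L hL0 hL1 f hfs hLip F hF x hx0 hxit
end

section
/- Let F̃ be a linear map on ℂᴺ with ‖F̃‖ ≤ L < 1 and set G = F̃ − I (invertible). Fix ε ∈ ℂᴺ, ε ≠ 0, and k ≥ 1; let Ũ and W̃ be the N×k matrices with columns ũ_j = F̃ʲ G ε and w̃_j = F̃ʲ G² ε, j = 0,…,k−1, and assume W̃ has full column rank k. Define s̃ − s := ε − Ũ W̃⁺ ũ₀ (the RRE error for the linear iteration started at s + ε). Then ‖G(s̃ − s)‖ = min { ‖g(F̃) G ε‖ : g a complex polynomial of degree at most k with g(1) = 1 }. -/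
open scoped Matrix Matrix.Norms.L2Operator

/-- A matrix acting on Euclidean vectors. -/
noncomputable def appE {m n : ℕ} (A : Matrix (Fin m) (Fin n) ℂ)
    (v : EuclideanSpace ℂ (Fin n)) : EuclideanSpace ℂ (Fin m) :=
  Matrix.toEuclideanLin A v

/-- The `N×k` matrix `U` with columns the first differences `u_{n+j} = x_{n+j+1} − x_{n+j}`,
`j = 0,…,k−1`. -/
noncomputable def Umat (N k n : ℕ) (x : ℕ → EuclideanSpace ℂ (Fin N)) :
    Matrix (Fin N) (Fin k) ℂ :=
  Matrix.of fun p j => (x (n + (j : ℕ) + 1) - x (n + (j : ℕ))) p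

/-- The `N×k` matrix `W` with columns the second differences
`w_{n+j} = u_{n+j+1} − u_{n+j}`, `j = 0,…,k−1`. -/
noncomputable def Wmat (N k n : ℕ) (x : ℕ → EuclideanSpace ℂ (Fin N)) :
    Matrix (Fin N) (Fin k) ℂ :=
  Matrix.of fun p j =>
    ((x (n + (j : ℕ) + 2) - x (n + (j : ℕ) + 1))
      - (x (n + (j : ℕ) + 1) - x (n + (j : ℕ)))) p

/-- The `N×k` matrix `Ũ` with columns `ũ_{n+j} = F̃ʲ(F̃ − I) ε_n` coming from the linear
iteration `x̃_n = x_n`, `x̃_{m+1} = s + F̃(x̃_m − s)`. -/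
noncomputable def UmatT (N k : ℕ)
    (F : EuclideanSpace ℂ (Fin N) →L[ℂ] EuclideanSpace ℂ (Fin N))
    (ε : EuclideanSpace ℂ (Fin N)) : Matrix (Fin N) (Fin k) ℂ :=
  Matrix.of fun p j => ((F ^ (j : ℕ) * (F - 1)) ε) p

/-- The `N×k` matrix `W̃` with columns `w̃_{n+j} = F̃ʲ(F̃ − I)² ε_n` coming from the linear
iteration `x̃_n = x_n`, `x̃_{m+1} = s + F̃(x̃_m − s)`. -/
noncomputable def WmatT (N k : ℕ)
    (F : EuclideanSpace ℂ (Fin N) →L[ℂ] EuclideanSpace ℂ (Fin N))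
    (ε : EuclideanSpace ℂ (Fin N)) : Matrix (Fin N) (Fin k) ℂ :=
  Matrix.of fun p j =>
    ((F ^ (j : ℕ) * (F - 1) ^ 2 :
      EuclideanSpace ℂ (Fin N) →L[ℂ] EuclideanSpace ℂ (Fin N)) ε) p

/-- The RRE approximation `s_{n,k} = x_n − U W⁺ u_n`. -/
noncomputable def sRRE (N k n : ℕ) (x : ℕ → EuclideanSpace ℂ (Fin N)) :
    EuclideanSpace ℂ (Fin N) :=
  x n - appE (Umat N k n x) (appE (pinv (Wmat N k n x)) (x (n + 1) - x n))

/-- The RRE approximation `s̃_{n,k} = x_n − Ũ W̃⁺ ũ_n` for the linear iteration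
`x̃_n = x_n`, `x̃_{m+1} = s + F̃(x̃_m − s)`, whose first difference at `n` is
`ũ_n = (F̃ − I)(x_n − s)`. -/
noncomputable def sRREt (N k n : ℕ)
    (F : EuclideanSpace ℂ (Fin N) →L[ℂ] EuclideanSpace ℂ (Fin N))
    (s : EuclideanSpace ℂ (Fin N)) (x : ℕ → EuclideanSpace ℂ (Fin N)) :
    EuclideanSpace ℂ (Fin N) :=
  x n - appE (UmatT N k F (x n - s))
    (appE (pinv (WmatT N k F (x n - s))) ((F - 1) (x n - s)))

/-!
Since `G = F̃ − I` commutes with `F̃`, we have `G Ũ = W̃`, so `G(s̃ − s) = Gε − W̃ c₀` with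
`c₀ = W̃⁺ Gε`. The polynomials of degree at most `k` with `g(1) = 1` are exactly the
`1 − (X − 1) q` with `deg q < k`, and for these `g(F̃) G ε = Gε − W̃ c`, `c` the coefficient vector
of `q`. The normal equations `W̃ᴴ (Gε − W̃ c₀) = 0` make the residual orthogonal to the range of
`W̃`, so Pythagoras shows that `c₀` minimises `‖Gε − W̃ c‖`.
-/

open Polynomial

lemma appE_of_cols {m n : ℕ} (v : Fin n → EuclideanSpace ℂ (Fin m))
    (c : EuclideanSpace ℂ (Fin n)) :
    appE (Matrix.of fun p j => v j p) c = ∑ j, c j • v j := by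
  ext p
  simp [appE, Matrix.mulVec, dotProduct, mul_comm]

open scoped ComplexOrder in
lemma isUnit_conjTranspose_mul_self_of_rank_eq {m n : Type*} [Fintype m] [Fintype n]
    [DecidableEq n] {W : Matrix m n ℂ} (hW : W.rank = Fintype.card n) : IsUnit (Wᴴ * W) := by
  refine Matrix.mulVec_surjective_iff_isUnit.mp fun y => ?_
  have htop : LinearMap.range (Wᴴ * W).mulVecLin = ⊤ := by
    apply Submodule.eq_top_of_finrank_eq
    rw [show Module.finrank ℂ (LinearMap.range (Wᴴ * W).mulVecLin) = (Wᴴ * W).rank from rfl,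
      Matrix.rank_conjTranspose_mul_self, hW, Module.finrank_fintype_fun_eq_card]
  exact LinearMap.range_eq_top.mp htop y

lemma inner_appE_sub_pinv_eq_zero {m n : ℕ} {W : Matrix (Fin m) (Fin n) ℂ}
    (hW : IsUnit (Wᴴ * W)) (v : EuclideanSpace ℂ (Fin m)) (c : EuclideanSpace ℂ (Fin n)) :
    inner ℂ (appE W c) (v - appE W (appE (pinv W) v)) = 0 := by
  have hnormal : Wᴴ * (W * pinv W) = Wᴴ := by
    rw [pinv, ← Matrix.mul_assoc, ← Matrix.mul_assoc,
      Matrix.mul_nonsing_inv _ ((Matrix.isUnit_iff_isUnit_det _).mp hW), Matrix.one_mul]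
  rw [appE, ← LinearMap.adjoint_inner_right, ← Matrix.toEuclideanLin_conjTranspose_eq_adjoint]
  simp only [appE, map_sub, ← LinearMap.comp_apply, ← Matrix.toLpLin_mul_same, hnormal, sub_self,
    inner_zero_right]

lemma norm_sub_appE_pinv_le {m n : ℕ} {W : Matrix (Fin m) (Fin n) ℂ} (hW : W.rank = n)
    (v : EuclideanSpace ℂ (Fin m)) (c : EuclideanSpace ℂ (Fin n)) :
    ‖v - appE W (appE (pinv W) v)‖ ≤ ‖v - appE W c‖ := by
  have hunit : IsUnit (Wᴴ * W) :=
    isUnit_conjTranspose_mul_self_of_rank_eq (by rw [hW, Fintype.card_fin])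
  set r := v - appE W (appE (pinv W) v)
  have hsplit : v - appE W c = r + appE W (appE (pinv W) v - c) := by
    simp only [r, appE, map_sub]; abel
  have horth : inner ℂ r (appE W (appE (pinv W) v - c)) = 0 := inner_eq_zero_symm.mp
    (inner_appE_sub_pinv_eq_zero hunit v _)
  rw [hsplit, mul_self_le_mul_self_iff (norm_nonneg _) (norm_nonneg _),
    norm_add_sq_eq_norm_sq_add_norm_sq_of_inner_eq_zero _ _ horth]
  exact le_add_of_nonneg_right (mul_self_nonneg _)

namespace Polynomial

variable {R : Type*} [CommRing R]

lemma exists_eq_one_sub_X_sub_C_mul_sum_monomial [Nontrivial R] {a : R} {g : R[X]} {k : ℕ}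
    (hdeg : g.natDegree ≤ k) (hg : g.eval a = 1) :
    ∃ c : Fin k → R, g = 1 - (X - C a) * ∑ i : Fin k, monomial i (c i) := by
  set q := (1 - g) /ₘ (X - C a)
  have hq : q ∈ degreeLT R k := by
    rw [mem_degreeLT]
    by_cases h0 : 1 - g = 0
    · simp [q, h0]
    refine (degree_divByMonic_lt _ _ h0 (by simp)).trans_le ?_
    refine degree_le_of_natDegree_le ((natDegree_sub_le _ _).trans ?_)
    simpa using hdeg
  have hroot : (X - C a) * q = 1 - g := mul_divByMonic_eq_iff_isRoot.mpr (by simp [hg])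
  refine ⟨fun i => q.coeff i, ?_⟩
  rw [q.sum_fin (monomial ·) (by simp) (mem_degreeLT.mp hq), sum_monomial_eq, hroot]
  ring

lemma natDegree_one_sub_X_sub_C_mul_sum_monomial_le (a : R) {k : ℕ} (c : Fin k → R) :
    (1 - (X - C a) * ∑ i : Fin k, monomial i (c i)).natDegree ≤ k := by
  cases k with
  | zero => simp
  | succ k =>
    have hsum : (∑ i : Fin (k + 1), monomial i (c i)).natDegree ≤ k :=
      natDegree_sum_le_of_forall_le _ _ fun i _ =>
        (natDegree_monomial_le _).trans (Nat.lt_succ_iff.mp i.isLt)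
    refine (natDegree_sub_le _ _).trans (max_le (by simp) ?_)
    simpa [add_comm] using natDegree_mul_le_of_le (natDegree_X_sub_C_le a) hsum

end Polynomial

lemma sub_one_mul_pow_mul_sub_one {A : Type*} [Ring A] (a : A) (j : ℕ) :
    (a - 1) * (a ^ j * (a - 1)) = a ^ j * (a - 1) ^ 2 := by
  rw [← mul_assoc, ((Commute.sub_left (Commute.refl a) (Commute.one_left a)).pow_right j).eq,
    mul_assoc, sq]

section RRE

variable {N k : ℕ} (F : EuclideanSpace ℂ (Fin N) →L[ℂ] EuclideanSpace ℂ (Fin N))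
  (ε : EuclideanSpace ℂ (Fin N))

lemma sub_one_apply_appE_UmatT (c : EuclideanSpace ℂ (Fin k)) :
    (F - 1) (appE (UmatT N k F ε) c) = appE (WmatT N k F ε) c := by
  rw [UmatT, WmatT, appE_of_cols, appE_of_cols, map_sum]
  simp only [map_smul, ← mul_apply_eq_comp, sub_one_mul_pow_mul_sub_one]

lemma aeval_one_sub_X_sub_one_mul_apply (c : EuclideanSpace ℂ (Fin k)) :
    aeval F (1 - (X - C 1) * ∑ i : Fin k, monomial i (c i)) ((F - 1) ε)
      = (F - 1) ε - appE (WmatT N k F ε) c := by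
  have hpoly : (1 - (X - C 1) * ∑ i : Fin k, monomial i (c i)) * (X - C 1)
      = (X - C 1) - (∑ i : Fin k, monomial i (c i)) * (X - C 1) ^ 2 := by ring
  have hG : aeval F (X - C 1 : ℂ[X]) = F - 1 := by simp
  rw [WmatT, appE_of_cols, ← hG, ← mul_apply_eq_comp, ← map_mul, hpoly]
  simp [aeval_monomial, Finset.sum_mul]

end RRE

theorem rre_linear_residual_minimization_general (N k : ℕ) (L : ℝ)
    (F : EuclideanSpace ℂ (Fin N) →L[ℂ] EuclideanSpace ℂ (Fin N))
    (ε : EuclideanSpace ℂ (Fin N))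
    (hWt : (WmatT N k F ε).rank = k) :
    IsLeast
      {r : ℝ | ∃ g : Polynomial ℂ, g.natDegree ≤ k ∧ g.eval 1 = 1 ∧
        r = ‖(Polynomial.aeval F g :
          EuclideanSpace ℂ (Fin N) →L[ℂ] EuclideanSpace ℂ (Fin N)) ((F - 1) ε)‖}
      ‖(F - 1) (ε - appE (UmatT N k F ε) (appE (pinv (WmatT N k F ε)) ((F - 1) ε)))‖ := by
  rw [map_sub, sub_one_apply_appE_UmatT]
  refine ⟨⟨_, natDegree_one_sub_X_sub_C_mul_sum_monomial_le 1 _, by simp,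
    by rw [aeval_one_sub_X_sub_one_mul_apply]⟩, ?_⟩
  rintro r ⟨g, hdeg, hg, rfl⟩
  obtain ⟨c, rfl⟩ := exists_eq_one_sub_X_sub_C_mul_sum_monomial hdeg hg
  rw [← WithLp.ofLp_toLp 2 c, aeval_one_sub_X_sub_one_mul_apply]
  exact norm_sub_appE_pinv_le hWt _ _

/-- Let `F̃` be a linear map on `ℂᴺ` with `‖F̃‖ ≤ L < 1`,
`G = F̃ − I`, `ε ≠ 0`, `k ≥ 1`; let `Ũ, W̃` have columns `F̃ʲGε`, `F̃ʲG²ε`,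
with `W̃` of full column rank `k`, and let `s̃ − s = ε − Ũ W̃⁺ (Gε)`. Then
`‖G(s̃ − s)‖ = min {‖g(F̃) G ε‖ : deg g ≤ k, g(1) = 1}`. -/
theorem rre_linear_residual_minimization (N k : ℕ) (hk : 1 ≤ k) (L : ℝ) (hL1 : L < 1)
    (F : EuclideanSpace ℂ (Fin N) →L[ℂ] EuclideanSpace ℂ (Fin N)) (hF : ‖F‖ ≤ L)
    (ε : EuclideanSpace ℂ (Fin N)) (hε : ε ≠ 0)
    (hWt : (WmatT N k F ε).rank = k) :
    IsLeast
      {r : ℝ | ∃ g : Polynomial ℂ, g.natDegree ≤ k ∧ g.eval 1 = 1 ∧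
        r = ‖(Polynomial.aeval F g :
          EuclideanSpace ℂ (Fin N) →L[ℂ] EuclideanSpace ℂ (Fin N)) ((F - 1) ε)‖}
      ‖(F - 1) (ε - appE (UmatT N k F ε) (appE (pinv (WmatT N k F ε)) ((F - 1) ε)))‖ :=
  rre_linear_residual_minimization_general N k L F ε hWt
end

section
/- Let τ ≥ 0, C ≥ 0, and 0 < θ ≤ 1. Let (a_r)_{r≥0} be a sequence of nonnegative reals satisfying a_{r+1} ≤ τ·(θ + C·a_r)²·a_r² for all r ≥ 0, and suppose τ·(θ + C·a₀)²·a₀ < 1. Then the sequence (a_r) is nonincreasing, a_r → 0 as r → ∞, and for every ε > 0 there is r₀ such that a_{r+1} ≤ (τθ² + ε)·a_r² for all r ≥ r₀; in particular the convergence is quadratic with asymptotic constant at most τθ². -/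
/-- Let `τ ≥ 0`, `C ≥ 0`, `0 < θ ≤ 1`. If `(a_r)` is a sequence of
nonnegative reals with `a_{r+1} ≤ τ (θ + C a_r)² a_r²` for all `r` and
`τ (θ + C a₀)² a₀ < 1`, then `(a_r)` is nonincreasing, `a_r → 0`, and for every `ε > 0`
there is `r₀` with `a_{r+1} ≤ (τ θ² + ε) a_r²` for all `r ≥ r₀`. -/
theorem rre_mcmode_quadratic_contraction (τ C θ : ℝ) (hτ : 0 ≤ τ) (hC : 0 ≤ C)
    (hθ0 : 0 < θ) (hθ1 : θ ≤ 1)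
    (a : ℕ → ℝ) (ha : ∀ r, 0 ≤ a r)
    (hrec : ∀ r, a (r + 1) ≤ τ * (θ + C * a r) ^ 2 * a r ^ 2)
    (h0 : τ * (θ + C * a 0) ^ 2 * a 0 < 1) :
    (∀ r, a (r + 1) ≤ a r) ∧
    Filter.Tendsto a Filter.atTop (nhds 0) ∧
    (∀ ε > (0 : ℝ), ∃ r₀, ∀ r ≥ r₀, a (r + 1) ≤ (τ * θ ^ 2 + ε) * a r ^ 2) := by
  set q : ℝ := τ * (θ + C * a 0) ^ 2 * a 0 with hq
  have hq0 : 0 ≤ q := by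
    apply mul_nonneg (mul_nonneg hτ (sq_nonneg _)) (ha 0)
  -- key induction: a r ≤ a 0 ∧ a (r+1) ≤ q * a r
  have key : ∀ r, a r ≤ a 0 ∧ a (r + 1) ≤ q * a r := by
    intro r
    induction r with
    | zero =>
      refine ⟨le_refl _, ?_⟩
      calc a 1 ≤ τ * (θ + C * a 0) ^ 2 * a 0 ^ 2 := hrec 0
        _ = q * a 0 := by ring
    | succ n ih =>
      obtain ⟨h1, h2⟩ := ih
      have h3 : a (n + 1) ≤ a 0 := by
        calc a (n + 1) ≤ q * a n := h2
          _ ≤ 1 * a n := by apply mul_le_mul_of_nonneg_right (le_of_lt h0) (ha n)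
          _ = a n := one_mul _
          _ ≤ a 0 := h1
      refine ⟨h3, ?_⟩
      have hb : θ + C * a (n + 1) ≤ θ + C * a 0 := by nlinarith
      have hbn : 0 ≤ θ + C * a (n + 1) := by nlinarith [ha (n + 1)]
      calc a (n + 2) ≤ τ * (θ + C * a (n + 1)) ^ 2 * a (n + 1) ^ 2 := hrec (n + 1)
        _ = (τ * (θ + C * a (n + 1)) ^ 2 * a (n + 1)) * a (n + 1) := by ring
        _ ≤ (τ * (θ + C * a 0) ^ 2 * a 0) * a (n + 1) := by
            apply mul_le_mul_of_nonneg_right _ (ha (n + 1))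
            have hsq : (θ + C * a (n + 1)) ^ 2 ≤ (θ + C * a 0) ^ 2 := by nlinarith
            calc τ * (θ + C * a (n + 1)) ^ 2 * a (n + 1)
                ≤ τ * (θ + C * a 0) ^ 2 * a (n + 1) :=
                  mul_le_mul_of_nonneg_right (mul_le_mul_of_nonneg_left hsq hτ) (ha _)
              _ ≤ τ * (θ + C * a 0) ^ 2 * a 0 :=
                  mul_le_mul_of_nonneg_left h3 (mul_nonneg hτ (sq_nonneg _))
        _ = q * a (n + 1) := rfl
  have hmono : ∀ r, a (r + 1) ≤ a r := by
    intro r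
    calc a (r + 1) ≤ q * a r := (key r).2
      _ ≤ 1 * a r := mul_le_mul_of_nonneg_right (le_of_lt h0) (ha r)
      _ = a r := one_mul _
  -- geometric bound: a r ≤ q^r * a 0
  have hgeo : ∀ r, a r ≤ q ^ r * a 0 := by
    intro r
    induction r with
    | zero => simp
    | succ n ih =>
      calc a (n + 1) ≤ q * a n := (key n).2
        _ ≤ q * (q ^ n * a 0) := mul_le_mul_of_nonneg_left ih hq0
        _ = q ^ (n + 1) * a 0 := by ring
  have htend : Filter.Tendsto a Filter.atTop (nhds 0) := by
    have hgt : Filter.Tendsto (fun r => q ^ r * a 0) Filter.atTop (nhds 0) := by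
      have := (tendsto_pow_atTop_nhds_zero_of_lt_one hq0 h0).mul_const (a 0)
      simpa using this
    exact tendsto_of_tendsto_of_tendsto_of_le_of_le tendsto_const_nhds hgt ha hgeo
  refine ⟨hmono, htend, ?_⟩
  intro ε hε
  set K : ℝ := τ * (2 * C + C ^ 2 * a 0) with hK
  have hK0 : 0 ≤ K := by
    have := ha 0
    positivity
  set δ : ℝ := ε / (K + 1) with hδ
  have hδ0 : 0 < δ := by positivity
  have hev : ∀ᶠ r in Filter.atTop, a r < δ :=
    htend.eventually (gt_mem_nhds hδ0)
  obtain ⟨r₀, hr₀⟩ := Filter.eventually_atTop.mp hev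
  refine ⟨r₀, fun r hr => ?_⟩
  have h1 : a r < δ := hr₀ r hr
  have h2 : a r ≤ a 0 := (key r).1
  have h3 : K * a r ≤ ε := by
    have h5 : K * a r ≤ K * δ := mul_le_mul_of_nonneg_left (le_of_lt h1) hK0
    have h4 : K * δ ≤ ε := by
      rw [hδ, ← mul_div_assoc, div_le_iff₀ (by linarith : (0:ℝ) < K + 1)]
      nlinarith
    linarith
  calc a (r + 1) ≤ τ * (θ + C * a r) ^ 2 * a r ^ 2 := hrec r
    _ ≤ (τ * θ ^ 2 + K * a r) * a r ^ 2 := by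
        have har := ha r
        have h5 : τ * (θ + C * a r) ^ 2 ≤ τ * θ ^ 2 + K * a r := by
          rw [hK]
          nlinarith [mul_nonneg (mul_nonneg (mul_nonneg hτ hC) har)
              (by linarith : (0:ℝ) ≤ 1 - θ),
            mul_nonneg (mul_nonneg (mul_nonneg hτ (mul_nonneg hC hC)) har)
              (by linarith : (0:ℝ) ≤ a 0 - a r)]
        exact mul_le_mul_of_nonneg_right h5 (sq_nonneg _)
    _ ≤ (τ * θ ^ 2 + ε) * a r ^ 2 :=
        mul_le_mul_of_nonneg_right (by linarith) (sq_nonneg _)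
end
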